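/- arXiv:2203.05126 — 3 statements merged into one kernel-verified Lean document; each statement's English description precedes it below -/
import Mathlib

section
/- Let m be a positive integer and let T ≥ 0, λ > 0, σ_0 > 0 be real numbers; set β = λ·σ_0². Define F : (0,∞) → ℝ by F(s) = (T/2)·s + (m/(2λ))·( log(σ_0²/s) − 1 + s/σ_0² ). Then F attains a unique minimum on (0,∞) at s* = σ_0²/(1 + (β/m)·T), i.e. σ_0²/s* = 1 + (β/m)·T, and the minimal value is F(s*) = (m·σ_0²/(2β))·log(σ_0²/s*) = (m·σ_0²/(2β))·log(1 + (β/m)·T). Consequently, for any real constants L and r, min_{s>0} [ L + r/(2λσ_0²) + F(s) ] = L + r/(2β) + (m·σ_0²/(2β))·log(1 + (β/m)·T). -/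
/-- Optimal posterior variance of the PACTran-Gaussian metric: the function
`F(s) = (T/2)s + (m/(2λ))(log(σ_0²/s) − 1 + s/σ_0²)` has a unique minimum on `(0,∞)` at
`s* = σ_0²/(1 + (β/m)T)` (so `σ_0²/s* = 1 + (β/m)T`) with minimal value
`(mσ_0²/(2β))·log(σ_0²/s*) = (mσ_0²/(2β))·log(1 + (β/m)T)`, where `β = λσ_0²`; consequently
`min_{s>0} [L + r/(2λσ_0²) + F(s)] = L + r/(2β) + (mσ_0²/(2β))·log(1 + (β/m)T)`. -/
theorem pactran_gaussian_variance_opt (m : ℕ) (hm : 0 < m)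
    (T lam σ0 : ℝ) (hT : 0 ≤ T) (hlam : 0 < lam) (hσ0 : 0 < σ0)
    (β : ℝ) (hβ : β = lam * σ0 ^ 2)
    (F : ℝ → ℝ)
    (hF : ∀ s : ℝ, F s = (T / 2) * s
        + ((m : ℝ) / (2 * lam)) * (Real.log (σ0 ^ 2 / s) - 1 + s / σ0 ^ 2))
    (sstar : ℝ) (hsstar : sstar = σ0 ^ 2 / (1 + (β / m) * T)) :
    (0 < sstar)
      ∧ (∀ s : ℝ, 0 < s → F sstar ≤ F s)
      ∧ (∀ s : ℝ, 0 < s → F s = F sstar → s = sstar)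
      ∧ (σ0 ^ 2 / sstar = 1 + (β / m) * T)
      ∧ (F sstar = ((m : ℝ) * σ0 ^ 2 / (2 * β)) * Real.log (σ0 ^ 2 / sstar))
      ∧ (F sstar = ((m : ℝ) * σ0 ^ 2 / (2 * β)) * Real.log (1 + (β / m) * T))
      ∧ (∀ L r : ℝ,
          IsLeast {v : ℝ | ∃ s : ℝ, 0 < s ∧ v = L + r / (2 * lam * σ0 ^ 2) + F s}
            (L + r / (2 * β)
              + ((m : ℝ) * σ0 ^ 2 / (2 * β)) * Real.log (1 + (β / m) * T))) := by
  have hm' : (0:ℝ) < m := Nat.cast_pos.mpr hm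
  have hσ2 : (0:ℝ) < σ0 ^ 2 := by positivity
  have hβ0 : 0 < β := by rw [hβ]; positivity
  have hA : 0 < 1 + (β / m) * T := by
    have : 0 ≤ (β / m) * T := mul_nonneg (le_of_lt (div_pos hβ0 hm')) hT
    linarith
  have hs0 : 0 < sstar := by rw [hsstar]; exact div_pos hσ2 hA
  have hratio : σ0 ^ 2 / sstar = 1 + (β / m) * T := by
    rw [hsstar]; field_simp
  -- key difference formula
  have hdiff : ∀ s : ℝ, 0 < s →
      F s - F sstar
        = ((m : ℝ) / (2 * lam)) * (s / sstar - 1 - Real.log (s / sstar)) := by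
    intro s hs
    rw [hF s, hF sstar,
      Real.log_div (ne_of_gt hσ2) (ne_of_gt hs),
      Real.log_div (ne_of_gt hσ2) (ne_of_gt hs0),
      Real.log_div (ne_of_gt hs) (ne_of_gt hs0)]
    have key : T / 2 + ((m : ℝ) / (2 * lam)) / σ0 ^ 2
        = ((m : ℝ) / (2 * lam)) / sstar := by
      rw [hsstar, hβ]
      field_simp
      ring
    have hss : sstar ≠ 0 := ne_of_gt hs0
    field_simp at key ⊢
    nlinarith [key, sq_nonneg sstar, sq_nonneg σ0]
  -- value at the minimizer
  have hval : F sstar = ((m : ℝ) / (2 * lam)) * Real.log (1 + (β / m) * T) := by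
    rw [hF sstar, hratio]
    have : (T / 2) * sstar + ((m : ℝ) / (2 * lam)) * (sstar / σ0 ^ 2 - 1) = 0 := by
      rw [hsstar, hβ]
      field_simp
      ring
    linarith [this]
  have hcoef : ((m : ℝ) * σ0 ^ 2 / (2 * β)) = (m : ℝ) / (2 * lam) := by
    rw [hβ]; field_simp
  have hmin : ∀ s : ℝ, 0 < s → F sstar ≤ F s := by
    intro s hs
    have hx : 0 < s / sstar := div_pos hs hs0
    have := Real.log_le_sub_one_of_pos hx
    have h2 := hdiff s hs
    nlinarith [div_pos hm' (by positivity : (0:ℝ) < 2 * lam)]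
  refine ⟨hs0, hmin, ?_, hratio, ?_, ?_, ?_⟩
  · intro s hs heq
    by_contra hne
    have hx : 0 < s / sstar := div_pos hs hs0
    have hx1 : s / sstar ≠ 1 := by
      intro h
      exact hne (by field_simp at h; linarith)
    have hlt := Real.log_lt_sub_one_of_pos hx hx1
    have h2 := hdiff s hs
    have hc : 0 < (m : ℝ) / (2 * lam) := div_pos hm' (by positivity)
    nlinarith
  · rw [hratio, hcoef]; exact hval
  · rw [hcoef]; exact hval
  · intro L r
    constructor
    · refine ⟨sstar, hs0, ?_⟩
      rw [hcoef, ← hval]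
      have hr2 : r / (2 * β) = r / (2 * lam * σ0 ^ 2) := by
        rw [hβ, ← mul_assoc]
      rw [hr2]
    · rintro v ⟨s, hs, rfl⟩
      have h1 := hmin s hs
      rw [hcoef, ← hval]
      have hr2 : r / (2 * β) = r / (2 * lam * σ0 ^ 2) := by
        rw [hβ, ← mul_assoc]
      rw [hr2]
      linarith
end

section
/- Let H be a nonempty finite type, (U, μ) a probability space, ℓ : H × U → [0,1] a function measurable in u for each h, and P : H → ℝ a probability mass function with P(h) > 0 for all h. For h ∈ H set L(h) = ∫ ℓ(h,u) dμ(u) and, for S = (u_1,…,u_N) ∈ U^N, L̂(h,S) = (1/N) Σ_{i=1}^N ℓ(h,u_i). Fix λ > 0, δ ∈ (0,1], N ≥ 1, and define Z(S) = Σ_h P(h)·exp(−λ·L̂(h,S)) and the Gibbs posterior Q*_S(h) = P(h)·exp(−λ·L̂(h,S))/Z(S). Then with probability at least 1 − δ over S drawn from μ^N, Σ_h Q*_S(h)·L(h) ≤ −(1/λ)·log Z(S) + (1/λ)·log(1/δ) + λ/(8N). -/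
/-!
For each hypothesis `h`, the deviation `L(h) - L̂(h, S)` is an average of `N` independent
centred `[0, 1]`-valued variables, hence sub-Gaussian with variance proxy `1 / (4N)` by
Hoeffding's lemma. So `F(S) = ∑_h P(h) exp (λ (L(h) - L̂(h, S)))` has mean at most
`exp (λ² / (8N))`, and by Markov's inequality `F(S) ≤ exp (λ² / (8N)) / δ` with probability at
least `1 - δ`. On that event Jensen's inequality for `exp` under the Gibbs posterior gives
`λ ∑_h Q*(h) L(h) ≤ log ∑_h Q*(h) exp (λ L(h)) = log F(S) - log Z(S)`.
-/

open MeasureTheory ProbabilityTheory Real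
open scoped NNReal

namespace ProbabilityTheory

variable {Ω : Type*} [MeasurableSpace Ω] {μ : Measure Ω}

lemma HasSubgaussianMGF.sum_pi [IsProbabilityMeasure μ] {ι : Type*} [Fintype ι] {X : Ω → ℝ}
    {c : ℝ≥0} (h : HasSubgaussianMGF X c μ) :
    HasSubgaussianMGF (fun ω : ι → Ω ↦ ∑ i, X (ω i)) (Fintype.card ι * c)
      (Measure.pi fun _ ↦ μ) := by
  have h_eval (i : ι) :
      HasSubgaussianMGF (fun ω : ι → Ω ↦ X (ω i)) c (Measure.pi fun _ ↦ μ) :=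
    .of_map (measurable_pi_apply i).aemeasurable <| by
      rwa [(measurePreserving_eval (fun _ ↦ μ) i).map_eq]
  have := sum_of_iIndepFun (iIndepFun_pi fun _ ↦ h.aemeasurable)
    fun i (_ : i ∈ Finset.univ) ↦ h_eval i
  rwa [Finset.sum_const, Finset.card_univ, nsmul_eq_mul] at this

lemma hasSubgaussianMGF_integral_sub_empiricalMean [IsProbabilityMeasure μ] {ι : Type*}
    [Fintype ι] [Nonempty ι] {X : Ω → ℝ} {a b : ℝ} (hX : AEMeasurable X μ)
    (hab : ∀ᵐ ω ∂μ, X ω ∈ Set.Icc a b) :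
    HasSubgaussianMGF (fun ω : ι → Ω ↦ μ[X] - (Fintype.card ι : ℝ)⁻¹ * ∑ i, X (ω i))
      ((‖b - a‖₊ / 2) ^ 2 / Fintype.card ι) (Measure.pi fun _ ↦ μ) := by
  have hn : (Fintype.card ι : ℝ) ≠ 0 := by positivity
  have := ((hasSubgaussianMGF_of_mem_Icc hX hab).sum_pi (ι := ι)).const_mul
    (-(Fintype.card ι : ℝ)⁻¹)
  convert this using 1
  · ext ω
    simp only [Finset.sum_sub_distrib, Finset.sum_const, Finset.card_univ, nsmul_eq_mul]
    field_simp
    ring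
  · apply NNReal.eq
    -- `const_mul` builds its parameter as a raw subtype, which the `ℝ≥0` cast lemmas miss.
    change (((‖b - a‖₊ / 2) ^ 2 / Fintype.card ι : ℝ≥0) : ℝ) =
      (-(Fintype.card ι : ℝ)⁻¹) ^ 2 * ((Fintype.card ι : ℝ) * ((‖b - a‖₊ / 2) ^ 2 : ℝ≥0))
    push_cast
    field_simp

lemma integral_sum_mul_exp_le_of_hasSubgaussianMGF {H : Type*} [Fintype H] {P : H → ℝ}
    (hP0 : ∀ h, 0 ≤ P h) (hP1 : ∑ h, P h = 1) {Y : H → Ω → ℝ} {c : ℝ≥0}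
    (hY : ∀ h, HasSubgaussianMGF (Y h) c μ) (t : ℝ) :
    ∫ ω, ∑ h, P h * exp (t * Y h ω) ∂μ ≤ exp (c * t ^ 2 / 2) := by
  rw [integral_finsetSum _ fun h _ ↦ ((hY h).integrable_exp_mul t).const_mul _]
  calc ∑ h, ∫ ω, P h * exp (t * Y h ω) ∂μ = ∑ h, P h * mgf (Y h) μ t := by
        simp only [integral_const_mul, mgf]
    _ ≤ ∑ h, P h * exp (c * t ^ 2 / 2) :=
        Finset.sum_le_sum fun h _ ↦ mul_le_mul_of_nonneg_left ((hY h).mgf_le t) (hP0 h)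
    _ = exp (c * t ^ 2 / 2) := by rw [← Finset.sum_mul, hP1, one_mul]

end ProbabilityTheory

lemma one_sub_ofReal_le_measure_le_div {α : Type*} [MeasurableSpace α] {μ : Measure α}
    [IsProbabilityMeasure μ] {f : α → ℝ} (hf0 : 0 ≤ᵐ[μ] f) (hfi : Integrable f μ) {A δ : ℝ}
    (hA : 0 < A) (hδ : 0 < δ) (hfA : ∫ x, f x ∂μ ≤ A) :
    1 - ENNReal.ofReal δ ≤ μ {x | f x ≤ A / δ} := by
  have h_markov : μ.real {x | A / δ ≤ f x} ≤ δ := by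
    have := (mul_meas_ge_le_integral_of_nonneg hf0 hfi (A / δ)).trans hfA
    rwa [div_mul_eq_mul_div, div_le_iff₀ hδ, mul_le_mul_iff_right₀ hA] at this
  have h_compl : μ {x | f x ≤ A / δ}ᶜ ≤ ENNReal.ofReal δ := by
    calc μ {x | f x ≤ A / δ}ᶜ ≤ μ {x | A / δ ≤ f x} :=
          measure_mono fun x (hx : ¬f x ≤ A / δ) ↦ (not_le.mp hx).le
      _ = ENNReal.ofReal (μ.real {x | A / δ ≤ f x}) :=
          (ofReal_measureReal (measure_ne_top _ _)).symm
      _ ≤ ENNReal.ofReal δ := ENNReal.ofReal_le_ofReal h_markov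
  rw [tsub_le_iff_right, ← measure_univ (μ := μ)]
  exact (measure_univ_le_add_compl _).trans (add_le_add_right h_compl _)

lemma Real.sum_mul_le_log_sum_mul_exp {ι : Type*} [Fintype ι] {w x : ι → ℝ}
    (hw0 : ∀ i, 0 ≤ w i) (hw1 : ∑ i, w i = 1) :
    ∑ i, w i * x i ≤ log (∑ i, w i * exp (x i)) := by
  have h_jensen := convexOn_exp.map_sum_le (t := Finset.univ) (fun i _ ↦ hw0 i) hw1
    (fun i _ ↦ Set.mem_univ (x i))
  simp only [smul_eq_mul] at h_jensen
  rwa [le_log_iff_exp_le ((exp_pos _).trans_le h_jensen)]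

lemma sum_gibbs_mul_le {H : Type*} [Fintype H] [Nonempty H] {P : H → ℝ} (hP : ∀ h, 0 < P h)
    {lam : ℝ} (hlam : 0 < lam) (L R : H → ℝ) :
    ∑ h, (P h * exp (-lam * R h) / ∑ h', P h' * exp (-lam * R h')) * L h ≤
      (log (∑ h, P h * exp (lam * (L h - R h))) - log (∑ h', P h' * exp (-lam * R h'))) /
        lam := by
  set Z := ∑ h', P h' * exp (-lam * R h')
  have hZ : 0 < Z := Finset.sum_pos (fun h _ ↦ by have := hP h; positivity) Finset.univ_nonempty
  have h_jensen := Real.sum_mul_le_log_sum_mul_exp (w := fun h ↦ P h * exp (-lam * R h) / Z)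
    (x := fun h ↦ lam * L h) (fun h ↦ by have := hP h; positivity)
    (by rw [← Finset.sum_div, div_self hZ.ne'])
  have h_tilt : ∑ h, P h * exp (-lam * R h) / Z * exp (lam * L h) =
      (∑ h, P h * exp (lam * (L h - R h))) / Z := by
    rw [Finset.sum_div]
    refine Finset.sum_congr rfl fun h _ ↦ ?_
    rw [mul_sub, sub_eq_add_neg, exp_add, ← neg_mul]
    ring
  have hF : 0 < ∑ h, P h * exp (lam * (L h - R h)) :=
    Finset.sum_pos (fun h _ ↦ by have := hP h; positivity) Finset.univ_nonempty
  rw [h_tilt, log_div hF.ne' hZ.ne'] at h_jensen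
  rw [le_div_iff₀ hlam, Finset.sum_mul]
  exact (Finset.sum_congr rfl fun h _ ↦ by ring).trans_le h_jensen

/-- High-probability bound for the Gibbs posterior: with probability at least `1 − δ` over
`S ~ μ^N`, the generalization error of the Gibbs posterior
`Q*_S(h) = P(h)·exp(−λ·L̂(h,S))/Z(S)` satisfies
`Σ_h Q*_S(h)·L(h) ≤ −(1/λ)·log Z(S) + (1/λ)·log(1/δ) + λ/(8N)`. -/
theorem gibbs_posterior_pac_bound {H : Type*} [Fintype H] [Nonempty H]
    {U : Type*} [MeasurableSpace U] (μ : Measure U) [IsProbabilityMeasure μ]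
    (ℓ : H → U → ℝ) (hmeas : ∀ h, Measurable (ℓ h))
    (hℓ : ∀ h u, ℓ h u ∈ Set.Icc (0 : ℝ) 1)
    (P : H → ℝ) (hPpos : ∀ h, 0 < P h) (hPsum : ∑ h, P h = 1)
    (lam : ℝ) (hlam : 0 < lam) (δ : ℝ) (hδ : δ ∈ Set.Ioc (0 : ℝ) 1)
    (N : ℕ) (hN : 1 ≤ N) :
    (1 : ENNReal) - ENNReal.ofReal δ ≤
      Measure.pi (fun _ : Fin N => μ)
        {S : Fin N → U |
          ∑ h, (P h * Real.exp (-lam * ((N : ℝ)⁻¹ * ∑ i, ℓ h (S i))) /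
              ∑ h', P h' * Real.exp (-lam * ((N : ℝ)⁻¹ * ∑ i, ℓ h' (S i))))
            * (∫ u, ℓ h u ∂μ)
          ≤ -(1 / lam) *
              Real.log (∑ h', P h' * Real.exp (-lam * ((N : ℝ)⁻¹ * ∑ i, ℓ h' (S i))))
            + (1 / lam) * Real.log (1 / δ) + lam / (8 * N)} := by
  have : Nonempty (Fin N) := ⟨⟨0, hN⟩⟩
  have h_dev (h : H) := hasSubgaussianMGF_integral_sub_empiricalMean (ι := Fin N)
    (hmeas h).aemeasurable (ae_of_all μ (hℓ h))
  simp only [Fintype.card_fin] at h_dev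
  set F : (Fin N → U) → ℝ :=
    fun S ↦ ∑ h, P h * exp (lam * (∫ u, ℓ h u ∂μ - (N : ℝ)⁻¹ * ∑ i, ℓ h (S i)))
  have hF_int : Integrable F (Measure.pi fun _ ↦ μ) :=
    integrable_finsetSum _ fun h _ ↦ ((h_dev h).integrable_exp_mul lam).const_mul _
  have hF_mean : ∫ S, F S ∂(Measure.pi fun _ ↦ μ) ≤ exp (lam ^ 2 / (8 * N)) := by
    refine (integral_sum_mul_exp_le_of_hasSubgaussianMGF (fun h ↦ (hPpos h).le) hPsum h_dev
      lam).trans_eq ?_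
    congr 1
    push_cast
    field_simp
    norm_num
  refine (one_sub_ofReal_le_measure_le_div (ae_of_all _ fun S ↦ ?_) hF_int (exp_pos _) hδ.1
    hF_mean).trans (measure_mono fun S (hS : F S ≤ _) ↦ ?_)
  · exact Finset.sum_nonneg fun h _ ↦ by have := hPpos h; positivity
  set Z := ∑ h', P h' * exp (-lam * ((N : ℝ)⁻¹ * ∑ i, ℓ h' (S i)))
  have hF_pos : 0 < F S :=
    Finset.sum_pos (fun h _ ↦ by have := hPpos h; positivity) Finset.univ_nonempty
  calc _ ≤ (log (F S) - log Z) / lam := sum_gibbs_mul_le hPpos hlam _ _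
    _ ≤ (log (exp (lam ^ 2 / (8 * N)) / δ) - log Z) / lam := by gcongr
    _ = -(1 / lam) * log Z + (1 / lam) * log (1 / δ) + lam / (8 * N) := by
      rw [log_div (exp_pos _).ne' hδ.1.ne', log_exp, one_div δ, log_inv]
      field_simp
      ring
end

section
/- Fix positive integers N, D, K. Let x_i ∈ ℝ^D (i = 1,…,N) be feature vectors and y_{ik} ∈ {0,1} one-hot labels with Σ_k y_{ik} = 1 for each i. For W ∈ ℝ^{D×K} and b ∈ ℝ^K define logits g_{ik} = Σ_{j=1}^D x_{ij}·W_{jk} + b_k, softmax probabilities p_{ik} = exp(g_{ik})/Σ_{k'} exp(g_{ik'}), and the empirical cross-entropy loss L̂(W,b) = (1/N) Σ_{i=1}^N ( −Σ_k y_{ik}·g_{ik} + log Σ_k exp(g_{ik}) ). Then the trace of the Hessian of L̂ at (W,b), namely Σ_{j,k} ∂²L̂/∂W_{jk}² + Σ_k ∂²L̂/∂b_k², equals (1/N) Σ_{i=1}^N (1 + ‖x_i‖²)·(1 − Σ_{k=1}^K p_{ik}²), and in particular this quantity is nonnegative. -/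
open scoped BigOperators

/-- Empirical cross-entropy loss `L̂(W,b)` of a linear (softmax) classifier with features
`x i : Fin D → ℝ`, one-hot labels `y i : Fin K → ℝ`, weights `W` and bias `b`. -/
noncomputable def ceLoss (N D K : ℕ) (x : Fin N → Fin D → ℝ) (y : Fin N → Fin K → ℝ)
    (W : Fin D → Fin K → ℝ) (b : Fin K → ℝ) : ℝ :=
  (N : ℝ)⁻¹ * ∑ i, (-(∑ k, y i k * ((∑ j, x i j * W j k) + b k))
      + Real.log (∑ k, Real.exp ((∑ j, x i j * W j k) + b k)))

/-- Softmax probabilities `p_{ik}` of the linear classifier. -/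
noncomputable def smax (N D K : ℕ) (x : Fin N → Fin D → ℝ)
    (W : Fin D → Fin K → ℝ) (b : Fin K → ℝ) (i : Fin N) (k : Fin K) : ℝ :=
  Real.exp ((∑ j, x i j * W j k) + b k) /
    ∑ k', Real.exp ((∑ j, x i j * W j k') + b k')

/-!
Each diagonal entry of the Hessian is a second derivative along a line on which, for every
sample `i`, only the logit `g_{ik}` moves, at rate `x_{ij}` (for `W_{jk}`) or `1` (for `b_k`).
The label term is linear in the logits, and the second derivative of `log ∑ exp` in its `k`-th
argument is `p_k (1 - p_k)`. Hence `∂²L̂/∂W_{jk}² = (1/N) ∑_i x_{ij}² p_{ik} (1 - p_{ik})`, and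
summing over `j` and `k` with `∑_k p_{ik} = 1` gives the formula; `0 ≤ p_{ik} ≤ 1` gives its sign.
-/

open Real Finset Function

lemma iteratedDeriv_two_eq_of_hasDerivAt {f f' : ℝ → ℝ} {v t₀ : ℝ}
    (hf : ∀ t, HasDerivAt f (f' t) t) (hf' : HasDerivAt f' v t₀) : iteratedDeriv 2 f t₀ = v := by
  rw [iteratedDeriv_succ, iteratedDeriv_one, funext fun t => (hf t).deriv]
  exact hf'.deriv

section CrossEntropy

variable {ι : Type*} [Fintype ι]

noncomputable def softmax (a : ι → ℝ) (k : ι) : ℝ := exp (a k) / ∑ k', exp (a k')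

lemma softmax_nonneg (a : ι → ℝ) (k : ι) : 0 ≤ softmax a k := by
  unfold softmax; positivity

lemma softmax_le_one (a : ι → ℝ) (k : ι) : softmax a k ≤ 1 :=
  div_le_one_of_le₀ (single_le_sum (fun k' _ => (exp_pos (a k')).le) (mem_univ k))
    (by positivity)

lemma sum_softmax [Nonempty ι] (a : ι → ℝ) : ∑ k, softmax a k = 1 := by
  simp only [softmax, ← sum_div]
  exact div_self (sum_pos (fun k _ => exp_pos (a k)) univ_nonempty).ne'

lemma sum_softmax_mul_one_sub [Nonempty ι] (a : ι → ℝ) :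
    ∑ k, softmax a k * (1 - softmax a k) = 1 - ∑ k, softmax a k ^ 2 := by
  simp only [mul_one_sub, sum_sub_distrib, sum_softmax, sq]

variable [DecidableEq ι]

lemma sum_apply_update {β M : Type*} [AddCommMonoid M] (f : ι → β → M) (a : ι → β) (k : ι)
    (s : β) :
    ∑ k', f k' (update a k s k') = f k s + ∑ k' ∈ univ \ {k}, f k' (a k') := by
  rw [← sum_update_of_mem (mem_univ k)]
  exact sum_congr rfl fun k' _ => apply_update f a k s k'

lemma hasDerivAt_sum_apply_update {f : ι → ℝ → ℝ} {f' : ℝ} (a : ι → ℝ) (k : ι) (s : ℝ)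
    (hf : HasDerivAt (f k) f' s) :
    HasDerivAt (fun s => ∑ k', f k' (update a k s k')) f' s := by
  simpa only [sum_apply_update] using hf.add_const _

lemma hasDerivAt_sum_exp_update (a : ι → ℝ) (k : ι) (s : ℝ) :
    HasDerivAt (fun s => ∑ k', exp (update a k s k')) (exp s) s :=
  hasDerivAt_sum_apply_update (f := fun _ => exp) a k s (hasDerivAt_exp s)

lemma sum_exp_update_pos (a : ι → ℝ) (k : ι) (s : ℝ) : 0 < ∑ k', exp (update a k s k') :=
  sum_pos (fun _ _ => exp_pos _) ⟨k, mem_univ k⟩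

lemma softmax_update_self (a : ι → ℝ) (k : ι) (s : ℝ) :
    softmax (update a k s) k = exp s / ∑ k', exp (update a k s k') := by
  rw [softmax, update_self]

lemma hasDerivAt_log_sum_exp_update (a : ι → ℝ) (k : ι) (s : ℝ) :
    HasDerivAt (fun s => log (∑ k', exp (update a k s k'))) (softmax (update a k s) k) s := by
  rw [softmax_update_self]
  exact (hasDerivAt_sum_exp_update a k s).log (sum_exp_update_pos a k s).ne'

lemma hasDerivAt_softmax_update (a : ι → ℝ) (k : ι) (s : ℝ) :
    HasDerivAt (fun s => softmax (update a k s) k)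
      (softmax (update a k s) k * (1 - softmax (update a k s) k)) s := by
  have hZ := (sum_exp_update_pos a k s).ne'
  simp only [softmax_update_self]
  exact ((hasDerivAt_exp s).fun_div (hasDerivAt_sum_exp_update a k s) hZ).congr_deriv
    (by field_simp)

noncomputable def crossEntropy (y a : ι → ℝ) : ℝ := -∑ k, y k * a k + log (∑ k, exp (a k))

lemma hasDerivAt_crossEntropy_update (y a : ι → ℝ) (k : ι) (s : ℝ) :
    HasDerivAt (fun s => crossEntropy y (update a k s)) (softmax (update a k s) k - y k) s := by
  have hlin := hasDerivAt_sum_apply_update (f := fun k' v => y k' * v) a k s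
    ((hasDerivAt_id s).const_mul (y k))
  exact (hlin.neg.add (hasDerivAt_log_sum_exp_update a k s)).congr_deriv (by ring)

lemma hasDerivAt_affine (α c t₀ t : ℝ) : HasDerivAt (fun t => α + c * (t - t₀)) c t := by
  simpa using (((hasDerivAt_id t).sub_const t₀).const_mul c).const_add α

lemma hasDerivAt_crossEntropy_line (y a : ι → ℝ) (k : ι) (c t₀ t : ℝ) :
    HasDerivAt (fun t => crossEntropy y (update a k (a k + c * (t - t₀))))
      (c * (softmax (update a k (a k + c * (t - t₀))) k - y k)) t :=
  ((hasDerivAt_crossEntropy_update y a k _).comp t (hasDerivAt_affine (a k) c t₀ t)).congr_deriv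
    (mul_comm _ _)

lemma hasDerivAt_deriv_crossEntropy_line (y a : ι → ℝ) (k : ι) (c t₀ : ℝ) :
    HasDerivAt (fun t => c * (softmax (update a k (a k + c * (t - t₀))) k - y k))
      (c ^ 2 * (softmax a k * (1 - softmax a k))) t₀ := by
  have h := ((hasDerivAt_softmax_update a k _).comp t₀ (hasDerivAt_affine (a k) c t₀ t₀)).sub_const
    (y k) |>.const_mul c
  simp only [sub_self, mul_zero, add_zero, update_eq_self] at h
  exact h.congr_deriv (by ring)

lemma iteratedDeriv_two_mean_crossEntropy_line {σ : Type*} [Fintype σ] (w : ℝ) (y a : σ → ι → ℝ)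
    (c : σ → ℝ) (k : ι) (t₀ : ℝ) :
    iteratedDeriv 2
        (fun t => w * ∑ i, crossEntropy (y i) (update (a i) k (a i k + c i * (t - t₀)))) t₀
      = w * ∑ i, c i ^ 2 * (softmax (a i) k * (1 - softmax (a i) k)) :=
  iteratedDeriv_two_eq_of_hasDerivAt
    (fun t => (HasDerivAt.fun_sum fun i _ =>
      hasDerivAt_crossEntropy_line (y i) (a i) k (c i) t₀ t).const_mul w)
    ((HasDerivAt.fun_sum fun i _ =>
      hasDerivAt_deriv_crossEntropy_line (y i) (a i) k (c i) t₀).const_mul w)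

end CrossEntropy

section Logits

variable {σ δ ι : Type*} [Fintype δ] [DecidableEq ι]

def logits (x : σ → δ → ℝ) (W : δ → ι → ℝ) (b : ι → ℝ) (i : σ) (k : ι) : ℝ :=
  ∑ j, x i j * W j k + b k

lemma logits_update_bias (x : σ → δ → ℝ) (W : δ → ι → ℝ) (b : ι → ℝ) (k : ι) (t : ℝ) (i : σ) :
    logits x W (update b k t) i = update (logits x W b i) k (logits x W b i k + (t - b k)) := by
  funext k'
  rcases eq_or_ne k' k with rfl | hk <;> simp [logits, *]

variable [DecidableEq δ]

lemma logits_update_weight (x : σ → δ → ℝ) (W : δ → ι → ℝ) (b : ι → ℝ) (j : δ) (k : ι)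
    (t : ℝ) (i : σ) :
    logits x (update W j (update (W j) k t)) b i
      = update (logits x W b i) k (logits x W b i k + x i j * (t - W j k)) := by
  have hterm : ∀ j' k', x i j' * update W j (update (W j) k t) j' k'
      = x i j' * W j' k' + if j' = j then (if k' = k then x i j * (t - W j k) else 0) else 0 := by
    intro j' k'
    rcases eq_or_ne j' j with rfl | hj <;> rcases eq_or_ne k' k with rfl | hk <;> simp [*]
    ring
  funext k'
  rcases eq_or_ne k' k with rfl | hk
  · simp only [logits, hterm, sum_add_distrib, sum_ite_eq', mem_univ, if_true, update_self]
    ring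
  · simp [logits, hterm, hk]

end Logits

lemma ceLoss_eq_mean_crossEntropy (N D K : ℕ) (x : Fin N → Fin D → ℝ) (y : Fin N → Fin K → ℝ)
    (W : Fin D → Fin K → ℝ) (b : Fin K → ℝ) :
    ceLoss N D K x y W b = (N : ℝ)⁻¹ * ∑ i, crossEntropy (y i) (logits x W b i) := rfl

lemma smax_eq_softmax_logits (N D K : ℕ) (x : Fin N → Fin D → ℝ) (W : Fin D → Fin K → ℝ)
    (b : Fin K → ℝ) (i : Fin N) (k : Fin K) :
    smax N D K x W b i k = softmax (logits x W b i) k := rfl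

theorem ceLoss_hessian_trace_general (N D K : ℕ) (hK : 0 < K)
    (x : Fin N → Fin D → ℝ) (y : Fin N → Fin K → ℝ)
    (W : Fin D → Fin K → ℝ) (b : Fin K → ℝ) :
    ((∑ j, ∑ k, iteratedDeriv 2
          (fun t : ℝ =>
            ceLoss N D K x y (Function.update W j (Function.update (W j) k t)) b)
          (W j k))
        + ∑ k, iteratedDeriv 2
            (fun t : ℝ => ceLoss N D K x y W (Function.update b k t)) (b k)
      = (N : ℝ)⁻¹ * ∑ i, (1 + ∑ j, (x i j) ^ 2) * (1 - ∑ k, (smax N D K x W b i k) ^ 2))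
    ∧ 0 ≤ (N : ℝ)⁻¹ * ∑ i, (1 + ∑ j, (x i j) ^ 2) * (1 - ∑ k, (smax N D K x W b i k) ^ 2) := by
  have : Nonempty (Fin K) := ⟨⟨0, hK⟩⟩
  set p := fun i => softmax (logits x W b i)
  have hW : ∀ j k, iteratedDeriv 2
      (fun t => ceLoss N D K x y (update W j (update (W j) k t)) b) (W j k)
        = (N : ℝ)⁻¹ * ∑ i, x i j ^ 2 * (p i k * (1 - p i k)) := fun j k => by
    simp only [ceLoss_eq_mean_crossEntropy, logits_update_weight]
    exact iteratedDeriv_two_mean_crossEntropy_line _ y _ (fun i => x i j) k (W j k)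
  have hb : ∀ k, iteratedDeriv 2 (fun t => ceLoss N D K x y W (update b k t)) (b k)
        = (N : ℝ)⁻¹ * ∑ i, p i k * (1 - p i k) := fun k => by
    simpa only [ceLoss_eq_mean_crossEntropy, logits_update_bias, one_mul, one_pow] using
      iteratedDeriv_two_mean_crossEntropy_line _ y _ (fun _ => 1) k (b k)
  simp only [smax_eq_softmax_logits, ← sum_softmax_mul_one_sub]
  refine ⟨?_, ?_⟩
  · simp only [hW, hb, ← mul_sum, ← mul_add]
    rw [sum_comm_cycle, sum_comm (s := univ (α := Fin K)), ← sum_add_distrib]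
    refine congrArg _ (sum_congr rfl fun i _ => ?_)
    rw [add_mul, one_mul, sum_mul_sum, add_comm]
  · exact mul_nonneg (by positivity) (sum_nonneg fun i _ => mul_nonneg (by positivity)
      (sum_nonneg fun k _ => mul_nonneg (softmax_nonneg _ k) (sub_nonneg.2 (softmax_le_one _ k))))

/-- Closed-form trace of the Hessian of the empirical cross-entropy loss over the top-layer
parameters `(W, b)`: `Σ_{j,k} ∂²L̂/∂W_{jk}² + Σ_k ∂²L̂/∂b_k²
  = (1/N) Σ_i (1 + ‖x_i‖²)(1 − Σ_k p_{ik}²)`, and this quantity is nonnegative. -/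
theorem ceLoss_hessian_trace (N D K : ℕ) (hN : 0 < N) (hD : 0 < D) (hK : 0 < K)
    (x : Fin N → Fin D → ℝ) (y : Fin N → Fin K → ℝ)
    (hy01 : ∀ i k, y i k = 0 ∨ y i k = 1) (hy1 : ∀ i, ∑ k, y i k = 1)
    (W : Fin D → Fin K → ℝ) (b : Fin K → ℝ) :
    ((∑ j, ∑ k, iteratedDeriv 2
          (fun t : ℝ =>
            ceLoss N D K x y (Function.update W j (Function.update (W j) k t)) b)
          (W j k))
        + ∑ k, iteratedDeriv 2
            (fun t : ℝ => ceLoss N D K x y W (Function.update b k t)) (b k)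
      = (N : ℝ)⁻¹ * ∑ i, (1 + ∑ j, (x i j) ^ 2) * (1 - ∑ k, (smax N D K x W b i k) ^ 2))
    ∧ 0 ≤ (N : ℝ)⁻¹ * ∑ i, (1 + ∑ j, (x i j) ^ 2) * (1 - ∑ k, (smax N D K x W b i k) ^ 2) :=
  ceLoss_hessian_trace_general N D K hK x y W b
end
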